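/- arXiv:1507.05370 — 2 statements merged into one kernel-verified Lean document; each statement's English description precedes it below -/
import Mathlib

section
/- Generalized Pythagorean theorem for Bregman projections: if Ω is a closed convex subset of S, P ∈ Ω, Q ∈ S, and P_Ω(Q) = argmin_{P'∈Ω} B_R(P',Q) is the Bregman projection of Q onto Ω, then B_R(P,Q) ≥ B_R(P, P_Ω(Q)) + B_R(P_Ω(Q), Q), and in particular B_R(P,Q) ≥ B_R(P, P_Ω(Q)). -/
/-!
The Bregman divergence satisfies the three-point identity
`B(P,Q) = B(P,M) + B(M,Q) + ⟪∇R(M) - ∇R(Q), P - M⟫`.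
For `M = P_Ω(Q)` the last term is the derivative of `B(·,Q)` at its minimiser `M` in the feasible
direction `P - M`, hence nonnegative by first-order optimality; and `B(M,Q) ≥ 0` because a convex
function lies above its tangent planes.
-/

open scoped RealInnerProductSpace

section Bregman

variable {E : Type*} [NormedAddCommGroup E] [InnerProductSpace ℝ E]

def bregmanDiv (R : E → ℝ) (gradR : E → E) (P Q : E) : ℝ := R P - R Q - ⟪P - Q, gradR Q⟫

theorem bregmanDiv_eq_add_add_inner {R : E → ℝ} {gradR : E → E} (P M Q : E) :
    bregmanDiv R gradR P Q =
      bregmanDiv R gradR P M + bregmanDiv R gradR M Q + ⟪gradR M - gradR Q, P - M⟫ := by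
  simp only [bregmanDiv, inner_sub_left, inner_sub_right, real_inner_comm]
  ring

variable [CompleteSpace E]

theorem ConvexOn.inner_gradient_sub_le {f : E → ℝ} {s : Set E} {x y g : E} (hf : ConvexOn ℝ s f)
    (hx : x ∈ s) (hy : y ∈ s) (hg : HasGradientAt f g x) : ⟪g, y - x⟫ ≤ f y - f x := by
  set φ : ℝ → ℝ := f ∘ AffineMap.lineMap x y
  have hφ : ConvexOn ℝ (Set.Icc 0 1) φ :=
    (hf.comp_affineMap _).subset (fun t ht => Convex.lineMap_mem hf.1 hx hy ht) (convex_Icc 0 1)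
  have hderiv : HasDerivAt φ ⟪g, y - x⟫ 0 := by
    simpa using hg.hasFDerivAt.comp_hasDerivAt_of_eq (0 : ℝ)
      ((AffineMap.lineMap x y).hasDerivAt ..) (AffineMap.lineMap_apply_zero x y).symm
  simpa [φ, slope] using hφ.le_slope_of_hasDerivAt (by simp) (by simp) zero_lt_one hderiv

theorem IsMinOn.inner_gradient_sub_nonneg {f : E → ℝ} {s : Set E} {x y g : E}
    (h : IsMinOn f s x) (hs : Convex ℝ s) (hx : x ∈ s) (hy : y ∈ s) (hg : HasGradientAt f g x) :
    0 ≤ ⟪g, y - x⟫ := by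
  simpa using h.localize.hasFDerivWithinAt_nonneg hg.hasFDerivAt.hasFDerivWithinAt
    (sub_mem_posTangentConeAt_of_segment_subset (hs.segment_subset hx hy))

theorem bregmanDiv_nonneg {R : E → ℝ} {gradR : E → E} {S : Set E} (hR : ConvexOn ℝ S R)
    {P Q : E} (hP : P ∈ S) (hQ : Q ∈ S) (hgrad : HasGradientAt R (gradR Q) Q) :
    0 ≤ bregmanDiv R gradR P Q := by
  have hsupport := hR.inner_gradient_sub_le hQ hP hgrad
  rw [real_inner_comm] at hsupport
  unfold bregmanDiv
  linarith

theorem hasGradientAt_bregmanDiv_left {R : E → ℝ} {gradR : E → E} {M Q : E}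
    (hgrad : HasGradientAt R (gradR M) M) :
    HasGradientAt (bregmanDiv R gradR · Q) (gradR M - gradR Q) M := by
  rw [hasGradientAt_iff_hasFDerivAt, map_sub]
  have hlin : HasFDerivAt (fun P => ⟪P - Q, gradR Q⟫)
      (InnerProductSpace.toDual ℝ E (gradR Q)) M := by
    simpa [Function.comp_def, real_inner_comm] using
      (InnerProductSpace.toDual ℝ E (gradR Q)).hasFDerivAt.comp M ((hasFDerivAt_id M).sub_const Q)
  exact (hgrad.hasFDerivAt.sub_const _).sub hlin

theorem bregmanDiv_add_bregmanDiv_le_of_isMinOn {R : E → ℝ} {gradR : E → E} {Ω : Set E}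
    (hΩ : Convex ℝ Ω) {P M Q : E} (hP : P ∈ Ω) (hM : M ∈ Ω)
    (hmin : IsMinOn (bregmanDiv R gradR · Q) Ω M) (hgrad : HasGradientAt R (gradR M) M) :
    bregmanDiv R gradR P M + bregmanDiv R gradR M Q ≤ bregmanDiv R gradR P Q := by
  have hoptimal := hmin.inner_gradient_sub_nonneg hΩ hM hP (hasGradientAt_bregmanDiv_left hgrad)
  rw [bregmanDiv_eq_add_add_inner P M Q]
  linarith

end Bregman

theorem bregman_pythagorean_general {n : ℕ} (S : Set (EuclideanSpace ℝ (Fin n)))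
    (R : EuclideanSpace ℝ (Fin n) → ℝ)
    (gradR : EuclideanSpace ℝ (Fin n) → EuclideanSpace ℝ (Fin n))
    (hgrad : ∀ x ∈ S, HasGradientAt R (gradR x) x)
    (hconv : StrictConvexOn ℝ S R)
    (B : EuclideanSpace ℝ (Fin n) → EuclideanSpace ℝ (Fin n) → ℝ)
    (hB : ∀ P Q, B P Q = R P - R Q - ⟪P - Q, gradR Q⟫)
    (Ω : Set (EuclideanSpace ℝ (Fin n))) (hΩS : Ω ⊆ S)
    (hΩconv : Convex ℝ Ω)
    (Q : EuclideanSpace ℝ (Fin n)) (hQ : Q ∈ S)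
    (projQ : EuclideanSpace ℝ (Fin n)) (hproj_mem : projQ ∈ Ω)
    (hproj_min : ∀ P' ∈ Ω, B projQ Q ≤ B P' Q)
    (P : EuclideanSpace ℝ (Fin n)) (hP : P ∈ Ω) :
    B P projQ + B projQ Q ≤ B P Q ∧ B P projQ ≤ B P Q := by
  obtain rfl : B = bregmanDiv R gradR := funext₂ hB
  have hpyth := bregmanDiv_add_bregmanDiv_le_of_isMinOn hΩconv hP hproj_mem hproj_min
    (hgrad projQ (hΩS hproj_mem))
  have hnonneg := bregmanDiv_nonneg hconv.convexOn (hΩS hproj_mem) hQ (hgrad Q hQ)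
  exact ⟨hpyth, by linarith⟩

theorem bregman_pythagorean {n : ℕ} (S : Set (EuclideanSpace ℝ (Fin n)))
    (hSclosed : IsClosed S) (hSconv : Convex ℝ S)
    (R : EuclideanSpace ℝ (Fin n) → ℝ)
    (gradR : EuclideanSpace ℝ (Fin n) → EuclideanSpace ℝ (Fin n))
    (hgrad : ∀ x ∈ S, HasGradientAt R (gradR x) x)
    (hconv : StrictConvexOn ℝ S R)
    (B : EuclideanSpace ℝ (Fin n) → EuclideanSpace ℝ (Fin n) → ℝ)
    (hB : ∀ P Q, B P Q = R P - R Q - ⟪P - Q, gradR Q⟫)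
    (Ω : Set (EuclideanSpace ℝ (Fin n))) (hΩS : Ω ⊆ S)
    (hΩclosed : IsClosed Ω) (hΩconv : Convex ℝ Ω)
    (Q : EuclideanSpace ℝ (Fin n)) (hQ : Q ∈ S)
    (projQ : EuclideanSpace ℝ (Fin n)) (hproj_mem : projQ ∈ Ω)
    (hproj_min : ∀ P' ∈ Ω, B projQ Q ≤ B P' Q)
    (hproj_unique : ∀ P' ∈ Ω, B P' Q = B projQ Q → P' = projQ)
    (P : EuclideanSpace ℝ (Fin n)) (hP : P ∈ Ω) :
    B P projQ + B projQ Q ≤ B P Q ∧ B P projQ ≤ B P Q :=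
  bregman_pythagorean_general S R gradR hgrad hconv B hB Ω hΩS hΩconv Q hQ projQ hproj_mem hproj_min
    P hP
end

section
/- Suppose pairs (P^t, α^t), t = 1,…,T, satisfy the regret bound max_{P∈Ξ_p} (1/T)Σ_t L(P, α^t) ≤ (1/T)Σ_t L(P^t, α^t) + ε and α^t = argmin_{α∈Δ} L(P^t, α) for each t, where L(P,α) = ⟨P, Φα - f⟩ is bilinear, Δ = {α : ‖α‖₁ ≤ τ} and Ξ_p = {P : ‖P‖_p ≤ 1} are compact convex. Then α̂ = (1/T)Σ_t α^t satisfies ‖Φα̂ - f‖_q ≤ min_{α∈Δ} ‖Φα - f‖_q + ε. -/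
/-!
By duality, `‖Φα̂ - f‖_q = L(P, α̂)` for some `P` in the unit `p`-ball. As `L(P, ·)` is affine,
`L(P, α̂)` is the average of the `L(P, αᵗ)`, which the regret bound controls by the average of the
`L(Pᵗ, αᵗ)` plus `ε`. Each `αᵗ` is a best response to `Pᵗ`, so `L(Pᵗ, αᵗ) ≤ L(Pᵗ, β)`, and Hölder's
inequality bounds this by `‖Φβ - f‖_q`.
-/

open Finset Matrix

namespace Real

variable {ι : Type*} (s : Finset ι) {p q : ℝ}

theorem isGreatest_Lp (f : ι → ℝ) (hpq : p.HolderConjugate q) :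
    IsGreatest ((fun g : ι → ℝ => ∑ i ∈ s, g i * f i) '' {g | (∑ i ∈ s, |g i| ^ q) ^ (1 / q) ≤ 1})
      ((∑ i ∈ s, |f i| ^ p) ^ (1 / p)) := by
  constructor
  · obtain ⟨⟨g, hg, hfg⟩, -⟩ := NNReal.isGreatest_Lp s (fun i => ‖f i‖₊) hpq
    -- flip the signs of an optimal dual vector for `|f|` to match those of `f`
    refine ⟨fun i => SignType.sign (f i) * g i, ?_, ?_⟩
    · have habs (i : ι) : |(SignType.sign (f i) : ℝ) * g i| ≤ g i := by
        rw [abs_mul, NNReal.abs_eq]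
        refine mul_le_of_le_one_left (g i).coe_nonneg ?_
        rcases SignType.sign (f i) with _ | _ | _ <;> simp
      have hg' : ∑ i ∈ s, (g i : ℝ) ^ q ≤ 1 := by exact_mod_cast hg
      refine rpow_le_one (by positivity) ((sum_le_sum fun i _ => ?_).trans hg')
        hpq.symm.one_div_pos.le
      exact rpow_le_rpow (abs_nonneg _) (habs i) hpq.symm.nonneg
    · have hfg' : ∑ i ∈ s, |f i| * g i = (∑ i ∈ s, |f i| ^ p) ^ (1 / p) := by
        simpa using congrArg ((↑) : NNReal → ℝ) hfg
      rw [← hfg']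
      refine sum_congr rfl fun i _ => ?_
      rw [mul_right_comm, sign_mul_self, mul_comm]
  · rintro _ ⟨g, hg, rfl⟩
    calc ∑ i ∈ s, g i * f i
        ≤ (∑ i ∈ s, |g i| ^ q) ^ (1 / q) * (∑ i ∈ s, |f i| ^ p) ^ (1 / p) :=
          inner_le_Lp_mul_Lq s g f hpq.symm
      _ ≤ (∑ i ∈ s, |f i| ^ p) ^ (1 / p) := mul_le_of_le_one_left (by positivity) hg

end Real

namespace Matrix

variable {κ m n : Type*} [Fintype m] [Fintype n]

theorem dotProduct_mulVec_average_sub (Φ : Matrix m n ℝ) (f P : m → ℝ) (α : κ → n → ℝ)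
    {s : Finset κ} (hs : s.Nonempty) :
    P ⬝ᵥ (Φ *ᵥ ((#s : ℝ)⁻¹ • ∑ t ∈ s, α t) - f) = (#s : ℝ)⁻¹ * ∑ t ∈ s, P ⬝ᵥ (Φ *ᵥ α t - f) := by
  have hs' : (#s : ℝ) ≠ 0 := by simpa using hs.ne_empty
  simp only [mulVec_smul, mulVec_sum, dotProduct_sub, dotProduct_smul, dotProduct_sum,
    sum_sub_distrib, sum_const, smul_eq_mul, nsmul_eq_mul]
  field_simp

end Matrix

theorem regret_to_sparse_approximation_general {M N T : ℕ} (hT : 0 < T)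
    (q p : ℝ) (hq : 1 < q) (hp : p = q / (q - 1))
    (Φ : Matrix (Fin M) (Fin N) ℝ) (f : Fin M → ℝ)
    (τ : ℝ) (ε : ℝ)
    (L : (Fin M → ℝ) → (Fin N → ℝ) → ℝ)
    (hL : ∀ P α, L P α = ∑ i, P i * (Φ.mulVec α - f) i)
    (Ps : Fin T → Fin M → ℝ) (αs : Fin T → Fin N → ℝ)
    (hPmem : ∀ t, (∑ i, |Ps t i| ^ p) ^ (1 / p) ≤ 1)
    (hαmin : ∀ t, ∀ β : Fin N → ℝ, (∑ j, |β j|) ≤ τ → L (Ps t) (αs t) ≤ L (Ps t) β)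
    (hregret : ∀ P : Fin M → ℝ, (∑ i, |P i| ^ p) ^ (1 / p) ≤ 1 →
      (1 / (T : ℝ)) * ∑ t, L P (αs t) ≤ (1 / (T : ℝ)) * ∑ t, L (Ps t) (αs t) + ε)
    (ahat : Fin N → ℝ) (hhat : ∀ j, ahat j = (∑ t, αs t j) / T) :
    ∀ β : Fin N → ℝ, (∑ j, |β j|) ≤ τ →
      (∑ i, |(Φ.mulVec ahat - f) i| ^ q) ^ (1 / q) ≤
        (∑ i, |(Φ.mulVec β - f) i| ^ q) ^ (1 / q) + ε := by
  intro β hβ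
  have hqp : q.HolderConjugate p := hp ▸ Real.HolderConjugate.conjExponent hq
  have hahat : ahat = (T : ℝ)⁻¹ • ∑ t, αs t := by
    ext j
    simp [hhat, div_eq_inv_mul]
  have hL' : ∀ P α, L P α = P ⬝ᵥ (Φ *ᵥ α - f) := hL
  obtain ⟨⟨P, hP, hPval⟩, -⟩ := Real.isGreatest_Lp univ (Φ *ᵥ ahat - f) hqp
  have hbest (t : Fin T) : L (Ps t) (αs t) ≤ (∑ i, |(Φ *ᵥ β - f) i| ^ q) ^ (1 / q) :=
    (hαmin t β hβ).trans <| (hL _ _).trans_le <|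
      (Real.isGreatest_Lp univ (Φ *ᵥ β - f) hqp).2 ⟨Ps t, hPmem t, rfl⟩
  calc (∑ i, |(Φ *ᵥ ahat - f) i| ^ q) ^ (1 / q)
      = L P ahat := by rw [hL, ← hPval]
    _ = (1 / (T : ℝ)) * ∑ t, L P (αs t) := by
      simp only [hL', hahat, one_div]
      simpa only [card_univ, Fintype.card_fin] using
        dotProduct_mulVec_average_sub Φ f P αs ⟨⟨0, hT⟩, mem_univ _⟩
    _ ≤ (1 / (T : ℝ)) * ∑ t, L (Ps t) (αs t) + ε := hregret P hP
    _ ≤ (∑ i, |(Φ *ᵥ β - f) i| ^ q) ^ (1 / q) + ε := by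
      gcongr
      rw [one_div, inv_mul_le_iff₀ (Nat.cast_pos.2 hT)]
      simpa using sum_le_card_nsmul univ _ _ fun t _ => hbest t

theorem regret_to_sparse_approximation {M N T : ℕ} (hT : 0 < T)
    (q p : ℝ) (hq : 1 < q) (hp : p = q / (q - 1))
    (Φ : Matrix (Fin M) (Fin N) ℝ) (f : Fin M → ℝ)
    (τ : ℝ) (hτ : 0 < τ) (ε : ℝ)
    (L : (Fin M → ℝ) → (Fin N → ℝ) → ℝ)
    (hL : ∀ P α, L P α = ∑ i, P i * (Φ.mulVec α - f) i)
    (Ps : Fin T → Fin M → ℝ) (αs : Fin T → Fin N → ℝ)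
    (hPmem : ∀ t, (∑ i, |Ps t i| ^ p) ^ (1 / p) ≤ 1)
    (hαmem : ∀ t, (∑ j, |αs t j|) ≤ τ)
    (hαmin : ∀ t, ∀ β : Fin N → ℝ, (∑ j, |β j|) ≤ τ → L (Ps t) (αs t) ≤ L (Ps t) β)
    (hregret : ∀ P : Fin M → ℝ, (∑ i, |P i| ^ p) ^ (1 / p) ≤ 1 →
      (1 / (T : ℝ)) * ∑ t, L P (αs t) ≤ (1 / (T : ℝ)) * ∑ t, L (Ps t) (αs t) + ε)
    (ahat : Fin N → ℝ) (hhat : ∀ j, ahat j = (∑ t, αs t j) / T) :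
    ∀ β : Fin N → ℝ, (∑ j, |β j|) ≤ τ →
      (∑ i, |(Φ.mulVec ahat - f) i| ^ q) ^ (1 / q) ≤
        (∑ i, |(Φ.mulVec β - f) i| ^ q) ^ (1 / q) + ε :=
  regret_to_sparse_approximation_general hT q p hq hp Φ f τ ε L hL Ps αs hPmem hαmin hregret ahat
    hhat
end
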